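/- arXiv:2511.13056 — 7 statements merged into one kernel-verified Lean document; each statement's English description precedes it below -/
import Mathlib

section
/- Let an instance have n ≥ 2 agents, a finite set M of m ≥ 1 goods listed as e_1, …, e_m, and additive valuations. Then for every agent i with the goods ordered so that v_i(e_1) ≥ v_i(e_2) ≥ … ≥ v_i(e_m), the (n−1)-maximin share of agent i over M \ {e_1} is at least the n-maximin share of agent i over M, i.e., MMS_i^{n−1}(M \ {e_1}) ≥ MMS_i^n(M). -/
/-- The `k`-maximin share of an additive valuation with item values `v` over the set
`S` of goods: the maximum over all partitions of `S` into `k` bundles of the minimum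
bundle value. -/
noncomputable def mms {M : Type*} [Fintype M] [DecidableEq M]
    (v : M → ℝ) (k : ℕ) (S : Finset M) : ℝ :=
  if hk : 0 < k then
    haveI : Nonempty (Fin k) := ⟨⟨0, hk⟩⟩
    Finset.sup' Finset.univ Finset.univ_nonempty fun f : M → Fin k =>
      Finset.inf' Finset.univ Finset.univ_nonempty fun j : Fin k =>
        ∑ g ∈ S.filter (fun g => f g = j), v g
  else 0

/-- Validity of the reduction rule `R₀`: with `n ≥ 2` agents and `m ≥ 1` ordered goods
(`e_1` corresponds to index `0`), for every agent whose item values `v` are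
non-increasing, the `(n-1)`-maximin share over `M \ {e_1}` is at least the
`n`-maximin share over `M`. -/
theorem reduction_R0_valid {n m : ℕ} (hn : 2 ≤ n) (hm : 1 ≤ m)
    (v : Fin m → ℝ) (hv : ∀ g, 0 ≤ v g)
    (hord : ∀ j k : Fin m, j ≤ k → v k ≤ v j) :
    mms v n Finset.univ ≤
      mms v (n - 1) (Finset.univ.erase (⟨0, by omega⟩ : Fin m)) := by
  classical
  obtain ⟨p, rfl⟩ := Nat.exists_eq_succ_of_ne_zero (show n ≠ 0 by omega)
  have hp : 0 < p := by omega
  set e1 : Fin m := ⟨0, by omega⟩ with he1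
  simp only [mms, Nat.succ_sub_one, dif_pos (Nat.succ_pos p), dif_pos hp]
  apply Finset.sup'_le
  intro f _
  set j0 := f e1 with hj0
  have hinj : Function.Injective (Fin.succAbove j0) := Fin.succAbove_right_injective
  set g : Fin m → Fin p := fun x => if h : f x = j0 then ⟨0, hp⟩
    else Classical.choose (Fin.exists_succAbove_eq h) with hg
  refine le_trans ?_ (Finset.le_sup' _ (Finset.mem_univ g))
  apply Finset.le_inf'
  intro t _
  refine le_trans (Finset.inf'_le _ (Finset.mem_univ (j0.succAbove t))) ?_
  apply Finset.sum_le_sum_of_subset_of_nonneg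
  · intro x hx
    simp only [Finset.mem_filter, Finset.mem_univ, true_and] at hx
    have hne : f x ≠ j0 := hx ▸ Fin.succAbove_ne j0 t
    refine Finset.mem_filter.mpr ⟨Finset.mem_erase.mpr ⟨?_, Finset.mem_univ x⟩, ?_⟩
    · intro h; exact hne (by rw [h, ← hj0])
    · have hgx : g x = Classical.choose (Fin.exists_succAbove_eq hne) := dif_neg hne
      apply hinj
      rw [hgx, Classical.choose_spec (Fin.exists_succAbove_eq hne), hx]
  · intro x _ _; exact hv x
end

section
/- Let an instance have n ≥ 2 agents, a finite set M of m ≥ n+1 goods listed as e_1, …, e_m, and additive valuations. Then for every agent i with the goods ordered so that v_i(e_1) ≥ v_i(e_2) ≥ … ≥ v_i(e_m), the (n−1)-maximin share of agent i over M \ {e_n, e_{n+1}} is at least the n-maximin share of agent i over M, i.e., MMS_i^{n−1}(M \ {e_n, e_{n+1}}) ≥ MMS_i^n(M). -/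
set_option maxHeartbeats 1000000 in
/-- Validity of the reduction rule `R₁`: with `n ≥ 2` agents and `m ≥ n+1` ordered
goods (the good `e_k` of the paper corresponds to index `k-1`), for every agent whose
item values `v` are non-increasing, the `(n-1)`-maximin share over
`M \ {e_n, e_{n+1}}` is at least the `n`-maximin share over `M`. -/
theorem reduction_R1_valid {n m : ℕ} (hn : 2 ≤ n) (hm : n + 1 ≤ m)
    (v : Fin m → ℝ) (hv : ∀ g, 0 ≤ v g)
    (hord : ∀ j k : Fin m, j ≤ k → v k ≤ v j) :
    mms v n Finset.univ ≤
      mms v (n - 1)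
        (Finset.univ \ {(⟨n - 1, by omega⟩ : Fin m), (⟨n, by omega⟩ : Fin m)}) := by
  simp only [mms]
  rw [dif_pos (by omega : 0 < n), dif_pos (by omega : 0 < n - 1)]
  apply Finset.sup'_le
  intro f _
  set a : Fin m := ⟨n - 1, by omega⟩ with ha
  set b : Fin m := ⟨n, by omega⟩ with hb
  have hav : a.val = n - 1 := by rw [ha]
  have hbv : b.val = n := by rw [hb]
  set S : Finset (Fin m) := Finset.univ \ {a, b} with hS
  -- pigeonhole on top n+1 goods: two of them in the same bundle
  obtain ⟨p, q, hpq, hfeq⟩ :=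
    Fintype.exists_ne_map_eq_of_card_lt
      (fun i : Fin (n+1) => f ⟨i.val, by omega⟩) (by simp)
  -- wlog p < q
  obtain ⟨jj, kk, hjklt, hkval, hfjk⟩ :
      ∃ jj kk : Fin m, jj.val < kk.val ∧ kk.val ≤ n ∧ f jj = f kk := by
    rcases lt_or_gt_of_ne hpq with h | h
    · exact ⟨⟨p.val, by omega⟩, ⟨q.val, by omega⟩, by simpa using Fin.lt_def.mp h,
        by simp; omega, hfeq⟩
    · exact ⟨⟨q.val, by omega⟩, ⟨p.val, by omega⟩, by simpa using Fin.lt_def.mp h,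
        by simp; omega, hfeq.symm⟩
  obtain ⟨t, ht⟩ : ∃ t : Fin n, t = f jj := ⟨_, rfl⟩
  rw [← ht] at hfjk
  have hjval : jj.val ≤ n - 1 := by omega
  have hjne_k : jj ≠ kk := fun h => by rw [h] at hjklt; omega
  have hjb : jj ≠ b := fun h => by rw [h] at hjval; omega
  have hab : a ≠ b := fun h => by rw [h] at hav; omega
  have hba : b ≠ a := fun h => hab h.symm
  have hvja : v a ≤ v jj := hord jj a (by rw [Fin.le_def]; omega)
  have hvkb : v b ≤ v kk := hord kk b (by rw [Fin.le_def]; omega)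
  have hvab : v b ≤ v a := hord a b (by rw [Fin.le_def]; omega)
  -- the modified allocation into n bundles
  set g : Fin m → Fin n := fun x =>
    if x = jj then (if kk = a then f b else f a)
    else if x = kk then f b else f x with hg
  -- collapse Fin n to Fin (n-1) by removing the doomed bundle t
  obtain ⟨ρ, hρ⟩ : ∃ ρ : Fin n → Fin (n - 1),
      ∀ s : Fin n, (ρ s).val = if s.val < t.val then s.val else s.val - 1 :=
    ⟨fun s => ⟨if s.val < t.val then s.val else s.val - 1,
      by have := s.isLt; have := t.isLt; split <;> omega⟩, fun s => rfl⟩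
  obtain ⟨ι, hι⟩ : ∃ ι : Fin (n - 1) → Fin n,
      ∀ u : Fin (n - 1), (ι u).val = if u.val < t.val then u.val else u.val + 1 :=
    ⟨fun u => ⟨if u.val < t.val then u.val else u.val + 1,
      by have := u.isLt; split <;> omega⟩, fun u => rfl⟩
  have hιt : ∀ u : Fin (n - 1), ι u ≠ t := by
    intro u hc
    have hc' := congrArg Fin.val hc
    have hu := u.isLt
    rw [hι] at hc'
    split at hc' <;> omega
  have hρι : ∀ u : Fin (n - 1), ρ (ι u) = u := by
    intro u
    have hu := u.isLt
    have ht' := t.isLt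
    apply Fin.ext
    rw [hρ, hι]
    rcases lt_or_ge u.val t.val with h | h
    · simp only [if_pos h]
    · simp only [if_neg (not_lt.mpr h)]
      rw [if_neg (by omega)]
      omega
  refine le_trans ?_ (Finset.le_sup' _ (Finset.mem_univ (fun x => ρ (g x))))
  apply Finset.le_inf'
  intro u _
  refine le_trans (Finset.inf'_le _ (Finset.mem_univ (ι u))) ?_
  obtain ⟨s, hs⟩ : ∃ s : Fin n, s = ι u := ⟨_, rfl⟩
  rw [← hs]
  have hst : s ≠ t := hs ▸ hιt u
  -- the injection argument
  obtain ⟨A, hA⟩ : ∃ A : Finset (Fin m), A = Finset.univ.filter (fun x => f x = s) :=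
    ⟨_, rfl⟩
  obtain ⟨B, hB⟩ : ∃ B : Finset (Fin m), B = S.filter (fun x => g x = s) := ⟨_, rfl⟩
  have hmemA : ∀ x, x ∈ A ↔ f x = s := by intro x; simp [hA]
  have hmemB : ∀ x, x ∈ B ↔ (x ≠ a ∧ x ≠ b) ∧ g x = s := by
    intro x; simp [hB, hS]
  obtain ⟨φ, hφ⟩ : ∃ φ : Fin m → Fin m, φ = fun x =>
      if x = a then jj else if x = b then (if kk = a then jj else kk) else x := ⟨_, rfl⟩
  have hAj : jj ∉ A := fun hmem => hst (ht.trans ((hmemA jj).mp hmem)).symm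
  have hAk : kk ∉ A := fun hmem => hst ((hfjk.trans ((hmemA kk).mp hmem))).symm
  have hφa : φ a = jj := by simp [hφ]
  have hφb : φ b = if kk = a then jj else kk := by simp [hφ, hba]
  have hφo : ∀ x, x ≠ a → x ≠ b → φ x = x := by
    intro x h1 h2; simp [hφ, h1, h2]
  have hgj : g jj = if kk = a then f b else f a := by simp [hg]
  have hgk : g kk = f b := by simp [hg, hjne_k.symm]
  have hgo : ∀ x, x ≠ jj → x ≠ kk → g x = f x := by
    intro x h1 h2; simp [hg, h1, h2]
  have hφmem : ∀ x ∈ A, φ x ∈ B := by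
    intro x hx
    rw [hmemA] at hx
    have hxj : x ≠ jj := fun h => hAj (by rw [← h]; exact (hmemA x).mpr hx)
    have hxk : x ≠ kk := fun h => hAk (by rw [← h]; exact (hmemA x).mpr hx)
    by_cases hxa : x = a
    · -- x = a, f a = s; φ x = jj
      have hfa : f a = s := hxa ▸ hx
      have hja : jj ≠ a := fun h => hst (by rw [← hfa, ← h, ← ht])
      have hka : kk ≠ a := fun h => hst (by rw [← hfa, ← h, ← hfjk])
      rw [hxa, hφa, hmemB]
      exact ⟨⟨hja, hjb⟩, by rw [hgj, if_neg hka]; exact hfa⟩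
    · by_cases hxb : x = b
      · -- x = b, f b = s
        have hfb : f b = s := hxb ▸ hx
        have hkb : kk ≠ b := fun h => hst (by rw [← hfb, ← h, ← hfjk])
        rw [hxb, hφb, hmemB]
        by_cases hka : kk = a
        · have hja : jj ≠ a := by rw [← hka]; exact hjne_k
          rw [if_pos hka]
          exact ⟨⟨hja, hjb⟩, by rw [hgj, if_pos hka]; exact hfb⟩
        · rw [if_neg hka]
          exact ⟨⟨hka, hkb⟩, by rw [hgk]; exact hfb⟩
      · rw [hφo x hxa hxb, hmemB]
        exact ⟨⟨hxa, hxb⟩, by rw [hgo x hxj hxk]; exact hx⟩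
  have hφdom : ∀ x ∈ A, v x ≤ v (φ x) := by
    intro x _
    by_cases hxa : x = a
    · rw [hxa, hφa]; exact hvja
    · by_cases hxb : x = b
      · rw [hxb, hφb]
        split
        · exact le_trans hvab hvja
        · exact hvkb
      · rw [hφo x hxa hxb]
  have hφinj : ∀ x ∈ A, ∀ y ∈ A, φ x = φ y → x = y := by
    have key : ∀ x ∈ A, ∀ y ∈ A, x = a → φ x = φ y → x = y := by
      intro x hx y hy hxa heq
      by_cases hya : y = a
      · rw [hxa, hya]
      · by_cases hyb : y = b
        · exfalso
          rw [hxa, hφa, hyb, hφb] at heq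
          split at heq
          · rename_i hka
            rw [hmemA] at hx
            rw [hxa] at hx
            rw [← hka, ← hfjk] at hx
            exact hst hx.symm
          · exact hjne_k heq
        · exfalso
          rw [hxa, hφa, hφo y hya hyb] at heq
          rw [← heq] at hy
          exact hAj hy
    intro x hx y hy heq
    by_cases hxa : x = a
    · exact key x hx y hy hxa heq
    · by_cases hya : y = a
      · exact (key y hy x hx hya heq.symm).symm
      · by_cases hxb : x = b
        · by_cases hyb : y = b
          · rw [hxb, hyb]
          · exfalso
            rw [hxb, hφb, hφo y hya hyb] at heq
            rw [← heq] at hy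
            split at hy
            · exact hAj hy
            · exact hAk hy
        · by_cases hyb : y = b
          · exfalso
            rw [hyb, hφb, hφo x hxa hxb] at heq
            rw [heq] at hx
            split at hx
            · exact hAj hx
            · exact hAk hx
          · rwa [hφo x hxa hxb, hφo y hya hyb] at heq
  have main : ∑ x ∈ A, v x ≤ ∑ y ∈ S.filter (fun x => ρ (g x) = u), v y :=
    calc ∑ x ∈ A, v x ≤ ∑ x ∈ A, v (φ x) := Finset.sum_le_sum hφdom
    _ = ∑ y ∈ A.image φ, v y := (Finset.sum_image hφinj).symm
    _ ≤ ∑ y ∈ B, v y :=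
        Finset.sum_le_sum_of_subset_of_nonneg
          (Finset.image_subset_iff.mpr hφmem) (fun y _ _ => hv y)
    _ ≤ ∑ y ∈ S.filter (fun x => ρ (g x) = u), v y := by
        apply Finset.sum_le_sum_of_subset_of_nonneg
        · intro x hx
          rw [hmemB] at hx
          rw [Finset.mem_filter]
          constructor
          · rw [hS, Finset.mem_sdiff]
            simp only [Finset.mem_univ, Finset.mem_insert, Finset.mem_singleton, true_and]
            tauto
          · rw [hx.2, hs, hρι]
        · exact fun y _ _ => hv y
  rw [hA] at main
  exact main
end

section
/- Let an instance have n ≥ 2 agents, a finite set M of m ≥ 2n+1 goods listed as e_1, …, e_m, and additive valuations. Then for every agent i with the goods ordered so that v_i(e_1) ≥ v_i(e_2) ≥ … ≥ v_i(e_m), the (n−1)-maximin share of agent i over M \ {e_{2n−1}, e_{2n}, e_{2n+1}} is at least the n-maximin share of agent i over M, i.e., MMS_i^{n−1}(M \ {e_{2n−1}, e_{2n}, e_{2n+1}}) ≥ MMS_i^n(M). -/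
set_option maxHeartbeats 1000000

lemma exists_three_lt {α : Type*} [LinearOrder α] {s : Finset α} (h : 3 ≤ s.card) :
    ∃ y0 y1 y2, y0 ∈ s ∧ y1 ∈ s ∧ y2 ∈ s ∧ y0 < y1 ∧ y1 < y2 := by
  have hsne : s.Nonempty := Finset.card_pos.mp (by omega)
  have hy2s : s.max' hsne ∈ s := s.max'_mem hsne
  have hs1ne : (s.erase (s.max' hsne)).Nonempty := Finset.card_pos.mp (by
    rw [Finset.card_erase_of_mem hy2s]; omega)
  set y2 := s.max' hsne
  set s1 := s.erase y2 with hs1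
  set y1 := s1.max' hs1ne with hy1d
  have hy1m : y1 ∈ s1 := s1.max'_mem hs1ne
  have hy1s : y1 ∈ s := Finset.mem_of_mem_erase hy1m
  have hy12 : y1 < y2 :=
    lt_of_le_of_ne (s.le_max' y1 hy1s) (Finset.ne_of_mem_erase hy1m)
  have hs0ne : (s1.erase y1).Nonempty := Finset.card_pos.mp (by
    rw [Finset.card_erase_of_mem hy1m, hs1, Finset.card_erase_of_mem hy2s]; omega)
  set y0 := (s1.erase y1).max' hs0ne with hy0d
  have hy0m : y0 ∈ s1.erase y1 := (s1.erase y1).max'_mem hs0ne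
  have hy01 : y0 < y1 :=
    lt_of_le_of_ne (s1.le_max' y0 (Finset.mem_of_mem_erase hy0m))
      (Finset.ne_of_mem_erase hy0m)
  have hy0s : y0 ∈ s := Finset.mem_of_mem_erase (Finset.mem_of_mem_erase hy0m)
  exact ⟨y0, y1, y2, hy0s, hy1s, hy2s, hy01, hy12⟩

lemma exists_perm {α : Type*} [DecidableEq α] (a0 a1 a2 y0 y1 y2 : α)
    (h01 : y0 ≠ a1) (h02 : y0 ≠ y1) (h03 : y0 ≠ a2) (h04 : y0 ≠ y2)
    (h11 : a1 ≠ a0) (h12 : a1 ≠ y0) (h13 : y1 ≠ a2) (h14 : y1 ≠ y2)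
    (h21 : a2 ≠ a0) (h22 : a2 ≠ y0) (h23 : a2 ≠ a1) (h24 : a2 ≠ y1) :
    ∃ π : Equiv.Perm α, π a0 = y0 ∧ π a1 = y1 ∧ π a2 = y2 ∧
      ∀ g, g ≠ a0 → g ≠ y0 → g ≠ a1 → g ≠ y1 → g ≠ a2 → g ≠ y2 → π g = g := by
  refine ⟨(Equiv.swap a0 y0).trans ((Equiv.swap a1 y1).trans (Equiv.swap a2 y2)),
    ?_, ?_, ?_, ?_⟩
  · simp only [Equiv.trans_apply]
    rw [Equiv.swap_apply_left, Equiv.swap_apply_of_ne_of_ne h01 h02,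
      Equiv.swap_apply_of_ne_of_ne h03 h04]
  · simp only [Equiv.trans_apply]
    rw [Equiv.swap_apply_of_ne_of_ne h11 h12, Equiv.swap_apply_left,
      Equiv.swap_apply_of_ne_of_ne h13 h14]
  · simp only [Equiv.trans_apply]
    rw [Equiv.swap_apply_of_ne_of_ne h21 h22, Equiv.swap_apply_of_ne_of_ne h23 h24,
      Equiv.swap_apply_left]
  · intro g h1 h2 h3 h4 h5 h6
    simp only [Equiv.trans_apply]
    rw [Equiv.swap_apply_of_ne_of_ne h1 h2, Equiv.swap_apply_of_ne_of_ne h3 h4,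
      Equiv.swap_apply_of_ne_of_ne h5 h6]

lemma exists_q {n : ℕ} (hn : 2 ≤ n) (jstar : Fin n) :
    ∃ q : Fin n → Fin (n - 1), ∀ r : Fin (n - 1), ∃ jj : Fin n, jj ≠ jstar ∧ q jj = r := by
  refine ⟨fun j => if _ : (j : ℕ) < (jstar : ℕ) then ⟨j, by have := jstar.isLt; omega⟩
    else ⟨(j : ℕ) - 1, by have := j.isLt; omega⟩, ?_⟩
  intro r
  by_cases hr : (r : ℕ) < (jstar : ℕ)
  · refine ⟨⟨r, by have := jstar.isLt; omega⟩, ?_, ?_⟩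
    · intro h
      rw [Fin.ext_iff] at h
      simp at h
      omega
    · show dite _ _ _ = r
      split
      · exact Fin.ext rfl
      · rename_i h
        simp only [Fin.val_mk] at h
        omega
  · refine ⟨⟨(r : ℕ) + 1, by have := r.isLt; omega⟩, ?_, ?_⟩
    · intro h
      rw [Fin.ext_iff] at h
      simp at h
      omega
    · show dite _ _ _ = r
      split
      · rename_i h
        simp only [Fin.val_mk] at h
        omega
      · exact Fin.ext (by simp)

/-- Validity of the reduction rule `R₂`: with `n ≥ 2` agents and `m ≥ 2n+1` ordered
goods (the good `e_k` of the paper corresponds to index `k-1`), for every agent whose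
item values `v` are non-increasing, the `(n-1)`-maximin share over
`M \ {e_{2n-1}, e_{2n}, e_{2n+1}}` is at least the `n`-maximin share over `M`. -/
theorem reduction_R2_valid {n m : ℕ} (hn : 2 ≤ n) (hm : 2 * n + 1 ≤ m)
    (v : Fin m → ℝ) (hv : ∀ g, 0 ≤ v g)
    (hord : ∀ j k : Fin m, j ≤ k → v k ≤ v j) :
    mms v n Finset.univ ≤
      mms v (n - 1)
        (Finset.univ \
          {(⟨2 * n - 2, by omega⟩ : Fin m), (⟨2 * n - 1, by omega⟩ : Fin m),
            (⟨2 * n, by omega⟩ : Fin m)}) := by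
  have hn0 : 0 < n := by omega
  have hn1 : 0 < n - 1 := by omega
  set a0 : Fin m := ⟨2 * n - 2, by omega⟩ with ha0
  set a1 : Fin m := ⟨2 * n - 1, by omega⟩ with ha1
  set a2 : Fin m := ⟨2 * n, by omega⟩ with ha2
  rw [mms, mms, dif_pos hn0, dif_pos hn1]
  apply Finset.sup'_le
  intro f _
  set T : Finset (Fin m) := Finset.univ.filter (fun g => (g : ℕ) ≤ 2 * n) with hT
  have hTcard : 2 * n + 1 ≤ T.card := by
    have := Finset.card_le_card_of_injOn (s := (Finset.univ : Finset (Fin (2 * n + 1)))) (t := T)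
      (fun i : Fin (2 * n + 1) => (⟨i, by omega⟩ : Fin m))
      (fun i _ => by
        rw [hT, Finset.mem_coe, Finset.mem_filter]
        exact ⟨Finset.mem_univ _, Nat.lt_succ_iff.mp i.isLt⟩)
      (fun i _ j _ hij => by simpa [Fin.ext_iff] using hij)
    simpa using this
  obtain ⟨jstar, -, hjs⟩ := Finset.exists_lt_card_fiber_of_mul_lt_card_of_maps_to
    (s := T) (t := (Finset.univ : Finset (Fin n))) (f := f) (n := 2)
    (fun a _ => Finset.mem_univ _)
    (by simp only [Finset.card_univ, Fintype.card_fin]; omega)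
  have hs3 : 3 ≤ (T.filter (fun g => f g = jstar)).card := hjs
  obtain ⟨y0, y1, y2, hy0s, hy1s, hy2s, hy01, hy12⟩ := exists_three_lt hs3
  have hmem : ∀ y ∈ T.filter (fun g => f g = jstar), f y = jstar ∧ (y : ℕ) ≤ 2 * n := by
    intro y hy
    rw [Finset.mem_filter, hT, Finset.mem_filter] at hy
    exact ⟨hy.2, hy.1.2⟩
  obtain ⟨hfy0, hy0le⟩ := hmem y0 hy0s
  obtain ⟨hfy1, hy1le⟩ := hmem y1 hy1s
  obtain ⟨hfy2, hy2le⟩ := hmem y2 hy2s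
  have hv01 : (y0 : ℕ) < y1 := hy01
  have hv12 : (y1 : ℕ) < y2 := hy12
  have hva0 : (a0 : ℕ) = 2 * n - 2 := by rw [ha0]
  have hva1 : (a1 : ℕ) = 2 * n - 1 := by rw [ha1]
  have hva2 : (a2 : ℕ) = 2 * n := by rw [ha2]
  have fne : ∀ x y : Fin m, (x : ℕ) ≠ (y : ℕ) → x ≠ y := by
    intro x y h hxy; exact h (by rw [hxy])
  obtain ⟨π, hπ0, hπ1, hπ2, hfix⟩ := exists_perm a0 a1 a2 y0 y1 y2
    (fne _ _ (by omega)) (fne _ _ (by omega)) (fne _ _ (by omega)) (fne _ _ (by omega))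
    (fne _ _ (by omega)) (fne _ _ (by omega)) (fne _ _ (by omega)) (fne _ _ (by omega))
    (fne _ _ (by omega)) (fne _ _ (by omega)) (fne _ _ (by omega)) (fne _ _ (by omega))
  have hkey : ∀ g : Fin m, f g ≠ jstar → v g ≤ v (π.symm g) := by
    intro g hg
    have hgy0 : g ≠ y0 := by rintro rfl; exact hg hfy0
    have hgy1 : g ≠ y1 := by rintro rfl; exact hg hfy1
    have hgy2 : g ≠ y2 := by rintro rfl; exact hg hfy2
    by_cases hA : g = a0 ∨ g = a1 ∨ g = a2
    · have hgval : 2 * n - 2 ≤ (g : ℕ) := by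
        rcases hA with rfl | rfl | rfl <;> omega
      have hπy : π (π.symm g) = g := Equiv.apply_symm_apply _ _
      have hyne0 : π.symm g ≠ a0 := by
        intro h; rw [h, hπ0] at hπy; exact hgy0 hπy.symm
      have hyne1 : π.symm g ≠ a1 := by
        intro h; rw [h, hπ1] at hπy; exact hgy1 hπy.symm
      have hyne2 : π.symm g ≠ a2 := by
        intro h; rw [h, hπ2] at hπy; exact hgy2 hπy.symm
      by_cases hyY : π.symm g = y0 ∨ π.symm g = y1 ∨ π.symm g = y2
      · have h1 : (π.symm g : ℕ) ≤ 2 * n := by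
          rcases hyY with h | h | h <;> rw [h] <;> omega
        have h2 : (π.symm g : ℕ) ≠ 2 * n - 2 := by
          intro h; exact hyne0 (Fin.ext (by omega))
        have h3 : (π.symm g : ℕ) ≠ 2 * n - 1 := by
          intro h; exact hyne1 (Fin.ext (by omega))
        have h4 : (π.symm g : ℕ) ≠ 2 * n := by
          intro h; exact hyne2 (Fin.ext (by omega))
        exact hord _ _ (by rw [Fin.le_def]; omega)
      · push_neg at hyY
        have hfixy := hfix _ hyne0 hyY.1 hyne1 hyY.2.1 hyne2 hyY.2.2
        rw [hfixy] at hπy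
        rcases hA with rfl | rfl | rfl
        · rw [hπy] at hfixy
          rw [hfixy] at hπ0
          exact absurd hπ0 hgy0
        · rw [hπy] at hfixy
          rw [hfixy] at hπ1
          exact absurd hπ1 hgy1
        · rw [hπy] at hfixy
          rw [hfixy] at hπ2
          exact absurd hπ2 hgy2
    · push_neg at hA
      have : π.symm g = g := by
        rw [Equiv.symm_apply_eq, hfix g hA.1 hgy0 hA.2.1 hgy1 hA.2.2 hgy2]
      rw [this]
  obtain ⟨q, hq⟩ := exists_q hn jstar
  refine le_trans ?_ (Finset.le_sup' _ (Finset.mem_univ (fun g => q (f (π g)))))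
  apply Finset.le_inf'
  intro r _
  obtain ⟨jj, hjjne, hjjr⟩ := hq r
  have hsub : Finset.univ.filter (fun g => f (π g) = jj) ⊆
      (Finset.univ \ {a0, a1, a2}).filter (fun g => q (f (π g)) = r) := by
    intro g hg
    rw [Finset.mem_filter] at hg
    rw [Finset.mem_filter, Finset.mem_sdiff]
    refine ⟨⟨Finset.mem_univ _, ?_⟩, by rw [hg.2, hjjr]⟩
    simp only [Finset.mem_insert, Finset.mem_singleton]
    rintro (rfl | rfl | rfl)
    · have h2 := hg.2
      rw [hπ0, hfy0] at h2
      exact hjjne h2.symm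
    · have h2 := hg.2
      rw [hπ1, hfy1] at h2
      exact hjjne h2.symm
    · have h2 := hg.2
      rw [hπ2, hfy2] at h2
      exact hjjne h2.symm
  have step1 : ∑ g ∈ Finset.univ.filter (fun g => f g = jj), v g ≤
      ∑ g ∈ Finset.univ.filter (fun g => f g = jj), v (π.symm g) := by
    apply Finset.sum_le_sum
    intro g hg
    rw [Finset.mem_filter] at hg
    exact hkey g (by rw [hg.2]; exact hjjne)
  have step2 : ∑ g ∈ Finset.univ.filter (fun g => f g = jj), v (π.symm g) =
      ∑ g ∈ Finset.univ.filter (fun g => f (π g) = jj), v g := by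
    refine (Finset.sum_equiv π ?_ ?_).symm
    · intro i
      simp [Finset.mem_filter]
    · intro i _
      rw [Equiv.symm_apply_apply]
  have step3 : ∑ g ∈ Finset.univ.filter (fun g => f (π g) = jj), v g ≤
      ∑ g ∈ (Finset.univ \ {a0, a1, a2}).filter (fun g => q (f (π g)) = r), v g :=
    Finset.sum_le_sum_of_subset_of_nonneg hsub (fun g _ _ => hv g)
  exact le_trans (Finset.inf'_le _ (Finset.mem_univ jj))
    (le_trans step1 (le_trans step2.le step3))
end

section
/- Let an instance have n ≥ 2 agents, a finite set M of m ≥ 3n+1 goods listed as e_1, …, e_m, and additive valuations. Then for every agent i with the goods ordered so that v_i(e_1) ≥ v_i(e_2) ≥ … ≥ v_i(e_m), the (n−1)-maximin share of agent i over M \ {e_{3n−2}, e_{3n−1}, e_{3n}, e_{3n+1}} is at least the n-maximin share of agent i over M, i.e., MMS_i^{n−1}(M \ {e_{3n−2}, e_{3n−1}, e_{3n}, e_{3n+1}}) ≥ MMS_i^n(M). -/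
theorem reduction_R3_helper {n m : ℕ} (hn : 2 ≤ n) (hm : 3 * n + 1 ≤ m)
    (v : Fin m → ℝ) (hv : ∀ g, 0 ≤ v g)
    (hord : ∀ j k : Fin m, j ≤ k → v k ≤ v j) (Rs : Finset (Fin m))
    (hRsmem : ∀ g : Fin m, g ∈ Rs ↔ 3 * n - 3 ≤ g.val ∧ g.val ≤ 3 * n) :
    mms v n Finset.univ ≤ mms v (n - 1) (Finset.univ \ Rs) := by
  classical
  have hn1 : 0 < n := by omega
  have hn2 : 0 < n - 1 := by omega
  haveI hne : Nonempty (Fin n) := ⟨⟨0, hn1⟩⟩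
  haveI hne' : Nonempty (Fin (n - 1)) := ⟨⟨0, hn2⟩⟩
  rw [mms, mms, dif_pos hn1, dif_pos hn2]
  apply Finset.sup'_le
  intro f _
  -- Rs has at most 4 elements
  have hRscard : Rs.card ≤ 4 := by
    have h : Rs.card ≤ (Finset.range 4).card := by
      apply Finset.card_le_card_of_injOn (fun g : Fin m => g.val - (3 * n - 3))
      · intro g hg
        simp only [Finset.mem_coe, Finset.mem_range]
        have := (hRsmem g).1 hg
        omega
      · intro g hg g' hg' hgg'
        have h1 := (hRsmem g).1 (Finset.mem_coe.1 hg)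
        have h2 := (hRsmem g').1 (Finset.mem_coe.1 hg')
        dsimp only at hgg'
        exact Fin.ext (by omega)
    simpa using h
  -- the set of the top 3n+1 goods
  have hTb : ∀ i ∈ Finset.range (3 * n + 1), i < m := fun i hi => by
    rw [Finset.mem_range] at hi; omega
  set T : Finset (Fin m) := Finset.attachFin (Finset.range (3 * n + 1)) hTb with hT
  have hTmem : ∀ g : Fin m, g ∈ T ↔ g.val < 3 * n + 1 := fun g => by
    rw [hT, Finset.mem_attachFin, Finset.mem_range]
  have hTcard : T.card = 3 * n + 1 := by
    rw [hT, Finset.card_attachFin, Finset.card_range]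
  -- pigeonhole: some bundle contains at least 4 of the top 3n+1 goods
  have hpig : ∃ t : Fin n, 4 ≤ (T.filter fun g => f g = t).card := by
    by_contra hcon
    push_neg at hcon
    have h1 : T.card = ∑ t : Fin n, (T.filter fun g => f g = t).card :=
      Finset.card_eq_sum_card_fiberwise fun x _ => Finset.mem_univ (f x)
    have h2 : ∑ t : Fin n, (T.filter fun g => f g = t).card ≤ ∑ _t : Fin n, 3 :=
      Finset.sum_le_sum fun t _ => by have := hcon t; omega
    rw [Finset.sum_const, Finset.card_univ, Fintype.card_fin, smul_eq_mul] at h2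
    omega
  obtain ⟨t, ht4⟩ := hpig
  set D : Finset (Fin m) := Rs.filter (fun g => ¬f g = t) with hD
  set E : Finset (Fin m) := (T.filter fun g => f g = t) \ Rs with hE
  have hDE : D.card ≤ E.card := by
    have h1 : (Rs.filter fun g => f g = t).card + D.card = Rs.card := by
      rw [hD]
      exact Finset.card_filter_add_card_filter_not (s := Rs) (p := fun g => f g = t)
    have h2 : E.card + ((T.filter fun g => f g = t) ∩ Rs).card = (T.filter fun g => f g = t).card := by
      rw [hE]
      exact Finset.card_sdiff_add_card_inter (T.filter fun g => f g = t) Rs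
    have h3 : ((T.filter fun g => f g = t) ∩ Rs).card ≤ (Rs.filter fun g => f g = t).card := by
      apply Finset.card_le_card
      intro g hg
      rw [Finset.mem_inter, Finset.mem_filter] at hg
      exact Finset.mem_filter.2 ⟨hg.2, hg.1.2⟩
    omega
  obtain ⟨C, hCE, hCcard⟩ := Finset.exists_subset_card_eq hDE
  set e := Finset.equivOfCardEq hCcard with he
  set pre : Fin m → Fin m := fun g => if hg : g ∈ C then ((e ⟨g, hg⟩ : {x // x ∈ D}) : Fin m) else g
    with hpre
  have hpre_eval : ∀ (x : {g // g ∈ C}), pre (x : Fin m) = ((e x : {g // g ∈ D}) : Fin m) := by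
    intro x
    rw [hpre]
    simp [x.2]
  have hpreC : ∀ g (hg : g ∈ C), pre g ∈ D := fun g hg => by
    rw [show (g : Fin m) = ((⟨g, hg⟩ : {x // x ∈ C}) : Fin m) from rfl, hpre_eval]
    exact (e ⟨g, hg⟩).2
  have hpreN : ∀ g, g ∉ C → pre g = g := fun g hg => by
    rw [hpre]; simp [hg]
  have hCval : ∀ g ∈ C, (g : Fin m).val < 3 * n - 3 := fun g hg => by
    have hgE := hCE hg
    rw [hE, Finset.mem_sdiff, Finset.mem_filter] at hgE
    have h1 := (hTmem g).1 hgE.1.1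
    have h2 := hgE.2
    rw [hRsmem] at h2
    omega
  have hprelt : ∀ g ∈ C, v (pre g) ≤ v g := fun g hg => by
    have h1 := hpreC g hg
    rw [hD, Finset.mem_filter, hRsmem] at h1
    have h2 := hCval g hg
    exact hord g (pre g) (by rw [Fin.le_def]; omega)
  -- relabeling of Fin n \ {t} as Fin (n-1)
  set r : Fin n → Fin (n - 1) := fun s =>
    if _h : s.val < t.val then ⟨s.val, by have := t.isLt; omega⟩
    else ⟨s.val - 1, by have := s.isLt; omega⟩ with hr
  set l : Fin (n - 1) → Fin n := fun j =>
    if _h : j.val < t.val then ⟨j.val, by have := j.isLt; omega⟩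
    else ⟨j.val + 1, by have := j.isLt; omega⟩ with hl
  have hlt : ∀ j : Fin (n - 1), l j ≠ t := by
    intro j hc
    rw [hl] at hc
    dsimp only at hc
    split at hc <;> (rw [Fin.ext_iff] at hc; simp only [Fin.val_mk] at hc; omega)
  have hrst : ∀ (s' : Fin n) (j : Fin (n - 1)), s' ≠ t → (r s' = j ↔ s' = l j) := by
    intro s' j hs'
    have h1 : s'.val ≠ t.val := fun hc => hs' (Fin.ext hc)
    have h2 := s'.isLt
    have h3 := j.isLt
    have h4 := t.isLt
    rw [hr, hl]
    dsimp only
    split <;> split <;> simp only [Fin.ext_iff, Fin.val_mk] <;> omega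
  -- the new labeling
  set f' : Fin m → Fin (n - 1) := fun g =>
    if f (pre g) = t then ⟨0, hn2⟩ else r (f (pre g)) with hf'
  refine le_trans ?_ (Finset.le_sup' _ (Finset.mem_univ f'))
  apply Finset.le_inf'
  intro j _
  set s : Fin n := l j with hs
  have hst : s ≠ t := hlt j
  refine le_trans (Finset.inf'_le _ (Finset.mem_univ s)) ?_
  set Bs : Finset (Fin m) := Finset.univ.filter (fun g => f g = s) with hBs
  set Y : Finset (Fin m) := C.filter (fun g => f (pre g) = s) with hY
  have hBsD : ∀ a ∈ Bs.filter (· ∈ Rs), a ∈ D := by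
    intro a ha
    rw [Finset.mem_filter] at ha
    rw [hBs, Finset.mem_filter] at ha
    rw [hD, Finset.mem_filter]
    refine ⟨ha.2, ?_⟩
    rw [ha.1.2]
    exact hst
  have hstep1 : ∑ g ∈ Bs.filter (· ∈ Rs), v g ≤ ∑ g ∈ Y, v g := by
    have heq : ∑ g ∈ Bs.filter (· ∈ Rs), v g = ∑ g ∈ Y, v (pre g) := by
      refine Finset.sum_bij' (i := fun a ha => ((e.symm ⟨a, hBsD a ha⟩ : {x // x ∈ C}) : Fin m))
        (j := fun a _ha => pre a) ?_ ?_ ?_ ?_ ?_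
      · intro a ha
        rw [hY, Finset.mem_filter]
        refine ⟨(e.symm ⟨a, hBsD a ha⟩).2, ?_⟩
        rw [hpre_eval, Equiv.apply_symm_apply]
        rw [Finset.mem_filter] at ha
        rw [hBs, Finset.mem_filter] at ha
        exact ha.1.2
      · intro a ha
        rw [hY, Finset.mem_filter] at ha
        have h1 := hpreC a ha.1
        rw [hD, Finset.mem_filter] at h1
        rw [Finset.mem_filter]
        constructor
        · rw [hBs, Finset.mem_filter]
          exact ⟨Finset.mem_univ _, ha.2⟩
        · exact h1.1
      · intro a ha
        rw [hpre_eval, Equiv.apply_symm_apply]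
      · intro a ha
        rw [hY, Finset.mem_filter] at ha
        have hkey : pre a = ((e ⟨a, ha.1⟩ : {x // x ∈ D}) : Fin m) := hpre_eval ⟨a, ha.1⟩
        simp only [hkey, Subtype.coe_eta, Equiv.symm_apply_apply]
      · intro a ha
        rw [hpre_eval, Equiv.apply_symm_apply]
    rw [heq]
    exact Finset.sum_le_sum fun g hg => hprelt g (Finset.mem_filter.1 hg).1
  have hdisj : Disjoint (Bs.filter (· ∉ Rs)) Y := by
    rw [Finset.disjoint_left]
    intro g hg1 hg2
    rw [hY, Finset.mem_filter] at hg2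
    have hgE := hCE hg2.1
    rw [hE, Finset.mem_sdiff, Finset.mem_filter] at hgE
    rw [Finset.mem_filter, hBs, Finset.mem_filter] at hg1
    apply hst
    rw [← hg1.1.2]
    exact hgE.1.2
  have hsub : (Bs.filter (· ∉ Rs)) ∪ Y ⊆ (Finset.univ \ Rs).filter (fun g => f' g = j) := by
    intro g hg
    rw [Finset.mem_union] at hg
    rw [Finset.mem_filter, Finset.mem_sdiff]
    rcases hg with hg | hg
    · rw [Finset.mem_filter, hBs, Finset.mem_filter] at hg
      have hfg : f g = s := hg.1.2
      have hgC : g ∉ C := by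
        intro hc
        have hgE := hCE hc
        rw [hE, Finset.mem_sdiff, Finset.mem_filter] at hgE
        apply hst
        rw [← hfg]
        exact hgE.1.2
      have hpg : pre g = g := hpreN g hgC
      refine ⟨⟨Finset.mem_univ _, hg.2⟩, ?_⟩
      rw [hf']
      dsimp only
      rw [hpg, hfg, if_neg hst]
      exact (hrst s j hst).2 hs
    · rw [hY, Finset.mem_filter] at hg
      have hgE := hCE hg.1
      rw [hE, Finset.mem_sdiff] at hgE
      refine ⟨⟨Finset.mem_univ _, hgE.2⟩, ?_⟩
      rw [hf']
      dsimp only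
      rw [hg.2, if_neg hst]
      exact (hrst s j hst).2 hs
  calc ∑ g ∈ Bs, v g
      = ∑ g ∈ Bs.filter (· ∈ Rs), v g + ∑ g ∈ Bs.filter (· ∉ Rs), v g :=
        (Finset.sum_filter_add_sum_filter_not Bs (· ∈ Rs) v).symm
    _ ≤ ∑ g ∈ Y, v g + ∑ g ∈ Bs.filter (· ∉ Rs), v g := by linarith
    _ = ∑ g ∈ (Bs.filter (· ∉ Rs)) ∪ Y, v g := by
        rw [Finset.sum_union hdisj]; ring
    _ ≤ ∑ g ∈ (Finset.univ \ Rs).filter (fun g => f' g = j), v g :=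
        Finset.sum_le_sum_of_subset_of_nonneg hsub (fun g _ _ => hv g)

/-- Validity of the reduction rule `R₃`: with `n ≥ 2` agents and `m ≥ 3n+1` ordered
goods (the good `e_k` of the paper corresponds to index `k-1`), for every agent whose
item values `v` are non-increasing, the `(n-1)`-maximin share over
`M \ {e_{3n-2}, e_{3n-1}, e_{3n}, e_{3n+1}}` is at least the `n`-maximin share
over `M`. -/
theorem reduction_R3_valid {n m : ℕ} (hn : 2 ≤ n) (hm : 3 * n + 1 ≤ m)
    (v : Fin m → ℝ) (hv : ∀ g, 0 ≤ v g)
    (hord : ∀ j k : Fin m, j ≤ k → v k ≤ v j) :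
    mms v n Finset.univ ≤
      mms v (n - 1)
        (Finset.univ \
          {(⟨3 * n - 3, by omega⟩ : Fin m), (⟨3 * n - 2, by omega⟩ : Fin m),
            (⟨3 * n - 1, by omega⟩ : Fin m), (⟨3 * n, by omega⟩ : Fin m)}) := by
  refine reduction_R3_helper hn hm v hv hord _ ?_
  intro g
  simp only [Finset.mem_insert, Finset.mem_singleton, Fin.ext_iff, Fin.val_mk]
  omega
end

section
/- Let (u_1, …, u_m) and (w_1, …, w_m) be non-increasing finite sequences of nonnegative reals with w_j ≤ u_j for every j. Let T and X be subsets of {1, …, m} of equal cardinality, and suppose there exists a bijection f : T → X such that f(t) ≤ t for every t ∈ T. Let (u'_j) be the sequence obtained from (u_j) by deleting the entries at positions in T, and let (w'_j) be the sequence obtained from (w_j) by deleting the entries at positions in X, both reindexed in non-increasing order. Then w'_j ≤ u'_j for every j ∈ {1, …, m − |T|}. -/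
/-!
The `j`-th smallest element of a finset `A` is at most `a` exactly when `A` has at least
`j + 1` elements `≤ a`. So the `j`-th smallest element of `Xᶜ` is at most that of `Tᶜ` as soon
as every initial segment `{x ≤ a}` meets `Xᶜ` in at most as many points as `Tᶜ`, i.e. meets
`T` in at most as many points as `X`; this holds because `f` maps `T ∩ {x ≤ a}`
injectively into `X ∩ {x ≤ a}`. As `w` is non-increasing, `w'_j` is then at most `w` at the
`j`-th position of `Tᶜ`, which is at most `u'_j`.
-/

open Finset

section
variable {α : Type*} [LinearOrder α]

theorem Monotone.apply_le_iff_succ_le_card_filter {k : ℕ} {f : Fin k → α} (hf : Monotone f)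
    (j : Fin k) (a : α) : f j ≤ a ↔ (j : ℕ) + 1 ≤ #{i | f i ≤ a} := by
  constructor
  · intro hj
    calc (j : ℕ) + 1 = #(Iic j) := (Fin.card_Iic j).symm
      _ ≤ #{i | f i ≤ a} := card_le_card fun i hi =>
          (mem_filter_univ _).2 ((hf (mem_Iic.1 hi)).trans hj)
  · intro hcard
    by_contra! hlt
    have hsub : ({i | f i ≤ a} : Finset (Fin k)) ⊆ Iio j := fun i hi => by
      have hia : f i ≤ a := (mem_filter_univ i).1 hi
      exact mem_Iio.2 (lt_of_not_ge fun hji => (hlt.trans_le (hf hji)).not_ge hia)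
    have := (card_le_card hsub).trans (Fin.card_Iio j).le
    omega

theorem Finset.orderEmbOfFin_le_iff_succ_le_card_filter (s : Finset α) {k : ℕ} (h : #s = k)
    (j : Fin k) (a : α) : s.orderEmbOfFin h j ≤ a ↔ (j : ℕ) + 1 ≤ #{x ∈ s | x ≤ a} := by
  rw [(s.orderEmbOfFin h).monotone.apply_le_iff_succ_le_card_filter]
  conv_rhs => rw [← map_orderEmbOfFin_univ s h, filter_map, card_map]
  rfl

theorem Finset.orderEmbOfFin_le_orderEmbOfFin_of_card_filter_le {A B : Finset α} {k : ℕ}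
    (hA : #A = k) (hB : #B = k) (hcount : ∀ a, #{x ∈ B | x ≤ a} ≤ #{x ∈ A | x ≤ a})
    (j : Fin k) : A.orderEmbOfFin hA j ≤ B.orderEmbOfFin hB j :=
  (A.orderEmbOfFin_le_iff_succ_le_card_filter hA j _).2 <|
    ((B.orderEmbOfFin_le_iff_succ_le_card_filter hB j _).1 le_rfl).trans (hcount _)

end

theorem Finset.card_filter_add_card_filter_compl {α : Type*} [Fintype α] [DecidableEq α]
    (s : Finset α) (p : α → Prop) [DecidablePred p] :
    #{x ∈ s | p x} + #{x ∈ sᶜ | p x} = #{x | p x} := by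
  rw [← card_union_of_disjoint (disjoint_filter_filter disjoint_compl_right), ← filter_union,
    union_compl]

theorem Finset.card_filter_compl_le_of_card_filter_le {α : Type*} [Fintype α] [DecidableEq α]
    {s t : Finset α} {p : α → Prop} [DecidablePred p]
    (h : #{x ∈ s | p x} ≤ #{x ∈ t | p x}) : #{x ∈ tᶜ | p x} ≤ #{x ∈ sᶜ | p x} := by
  have hs := s.card_filter_add_card_filter_compl p
  have ht := t.card_filter_add_card_filter_compl p
  omega

theorem Finset.card_filter_le_le_of_injective_of_map_le {α : Type*} [Preorder α] [DecidableLE α]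
    {s t : Finset α}
    (f : s → t) (hf : Function.Injective f) (hle : ∀ x, (f x : α) ≤ x) (a : α) :
    #{x ∈ s | x ≤ a} ≤ #{x ∈ t | x ≤ a} := by
  classical
  refine card_le_card_of_injOn (fun x => if hx : x ∈ s then (f ⟨x, hx⟩ : α) else x) ?_ ?_
  · intro x hx
    obtain ⟨hxs, hxa⟩ := mem_filter.1 hx
    simp only [dif_pos hxs]
    exact mem_filter.2 ⟨(f ⟨x, hxs⟩).2, (hle _).trans hxa⟩
  · intro x hx y hy hxy
    have hxs := (mem_filter.1 hx).1
    have hys := (mem_filter.1 hy).1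
    simp only [dif_pos hxs, dif_pos hys] at hxy
    exact congrArg Subtype.val (hf (Subtype.ext hxy))

/-- Removing a dominance bundle preserves the witness property.  Let `(u j)` and
`(w j)` be non-increasing sequences of nonnegative reals with `w j ≤ u j` for all
`j`, let `T` and `X` be sets of positions with a bijection `f : T → X` satisfying
`f t ≤ t` for every `t ∈ T`.  Deleting the entries of `u` at positions in `T` and
the entries of `w` at positions in `X` (both reindexed in non-increasing order,
i.e. enumerating the complements in increasing position order) preserves the
pointwise domination. -/
theorem remove_dominance_bundle_preserves_witness {m : ℕ} (u w : Fin m → ℝ)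
    (hw : ∀ j k : Fin m, j ≤ k → w k ≤ w j)
    (hdom : ∀ j, w j ≤ u j)
    (T X : Finset (Fin m)) (hcard : X.card = T.card)
    (f : {x : Fin m // x ∈ T} → {x : Fin m // x ∈ X})
    (hf : Function.Bijective f)
    (hfle : ∀ t : {x : Fin m // x ∈ T}, ((f t : Fin m) : ℕ) ≤ ((t : Fin m) : ℕ)) :
    ∀ j : Fin (m - T.card),
      w ((Xᶜ.orderIsoOfFin
            (by simp [Finset.card_compl, hcard])) j) ≤
        u ((Tᶜ.orderIsoOfFin
            (by simp [Finset.card_compl])) j) := by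
  intro j
  have hcount : ∀ a, #{x ∈ Xᶜ | x ≤ a} ≤ #{x ∈ Tᶜ | x ≤ a} := fun a =>
    card_filter_compl_le_of_card_filter_le
      (card_filter_le_le_of_injective_of_map_le f hf.injective hfle a)
  rw [coe_orderIsoOfFin_apply, coe_orderIsoOfFin_apply]
  exact (hw _ _ (orderEmbOfFin_le_orderEmbOfFin_of_card_filter_le _ _ hcount j)).trans (hdom _)
end

section
/- Let an instance have n ≥ 1 agents, a finite set M of goods, and additive valuations. Fix an agent i and suppose β is the largest nonnegative real satisfying β = (1/n)·Σ_{e∈M} min(v_i(e), β) (the truncated proportional share TPS_i of agent i). Then TPS_i ≥ MMS_i ≥ (n/(2n−1))·TPS_i, where MMS_i is the n-maximin share of agent i over M. -/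
/-- Extraction lemma: from a set of total weight at least `τ`, where every item weighs
less than `2τ`, one can extract a subset of weight in `[τ, 2τ)`. -/
lemma tps_extract {M : Type*} [DecidableEq M] (w : M → ℝ) (τ : ℝ)
    (hτ : 0 < τ) (hw0 : ∀ e, 0 ≤ w e) (hw2 : ∀ e, w e < 2 * τ) :
    ∀ S : Finset M, τ ≤ ∑ e ∈ S, w e →
      ∃ B ⊆ S, τ ≤ ∑ e ∈ B, w e ∧ ∑ e ∈ B, w e < 2 * τ := by
  intro S
  induction S using Finset.strongInduction with
  | _ S ih =>
    intro hS
    by_cases hbig : ∃ e ∈ S, τ ≤ w e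
    · obtain ⟨e, he, hτe⟩ := hbig
      exact ⟨{e}, Finset.singleton_subset_iff.2 he, by simpa using hτe,
        by simpa using hw2 e⟩
    · push_neg at hbig
      have hne : S.Nonempty := by
        by_contra h
        rw [Finset.not_nonempty_iff_eq_empty] at h
        rw [h, Finset.sum_empty] at hS
        linarith
      obtain ⟨e, he⟩ := hne
      by_cases hrest : τ ≤ ∑ x ∈ S.erase e, w x
      · obtain ⟨B, hB, h1, h2⟩ := ih (S.erase e) (Finset.erase_ssubset he) hrest
        exact ⟨B, hB.trans (Finset.erase_subset _ _), h1, h2⟩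
      · push_neg at hrest
        refine ⟨S, subset_rfl, hS, ?_⟩
        have := Finset.add_sum_erase S w he
        have := hbig e he
        linarith

/-- Partition lemma: a set of total weight at least `2τk + τ`, with items of weight
less than `2τ`, can be split into `k+1` disjoint parts each of weight at least `τ`. -/
lemma tps_partition {M : Type*} [DecidableEq M] (w : M → ℝ) (τ : ℝ)
    (hτ : 0 < τ) (hw0 : ∀ e, 0 ≤ w e) (hw2 : ∀ e, w e < 2 * τ) :
    ∀ k : ℕ, ∀ S : Finset M, 2 * τ * k + τ ≤ ∑ e ∈ S, w e →
      ∃ P : Fin (k + 1) → Finset M, (∀ j, P j ⊆ S) ∧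
        (∀ j j', j ≠ j' → Disjoint (P j) (P j')) ∧
        (∀ j, τ ≤ ∑ e ∈ P j, w e) := by
  intro k
  induction k with
  | zero =>
    intro S hS
    refine ⟨fun _ => S, fun _ => subset_rfl,
      fun j j' h => absurd ((Fin.fin_one_eq_zero j).trans (Fin.fin_one_eq_zero j').symm) h,
      fun _ => ?_⟩
    simpa using hS
  | succ k ih =>
    intro S hS
    have hk0 : (0:ℝ) ≤ 2 * τ * k := by positivity
    push_cast at hS
    have hτS : τ ≤ ∑ e ∈ S, w e := by nlinarith
    obtain ⟨B, hBS, hB1, hB2⟩ := tps_extract w τ hτ hw0 hw2 S hτS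
    have hsd : ∑ e ∈ S \ B, w e = ∑ e ∈ S, w e - ∑ e ∈ B, w e :=
      Finset.sum_sdiff_eq_sub hBS
    have hrec : 2 * τ * k + τ ≤ ∑ e ∈ S \ B, w e := by
      rw [hsd]
      linarith
    obtain ⟨P', hP'S, hP'd, hP'τ⟩ := ih (S \ B) hrec
    refine ⟨Fin.cons B P', ?_, ?_, ?_⟩
    · intro j
      refine Fin.cases ?_ (fun i => ?_) j
      · exact hBS
      · exact (hP'S i).trans (Finset.sdiff_subset)
    · intro j j'
      have hdB : ∀ i : Fin (k+1), Disjoint B (P' i) := fun i =>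
        Finset.disjoint_of_subset_right (hP'S i) Finset.disjoint_sdiff
      refine Fin.cases ?_ (fun i => ?_) j <;>
        refine Fin.cases ?_ (fun i' => ?_) j' <;> intro hne
      · exact absurd rfl hne
      · simpa using hdB i'
      · simpa using (hdB i).symm
      · simp only [Fin.cons_succ]
        exact hP'd i i' (fun h => hne (by rw [h]))
    · intro j
      refine Fin.cases ?_ (fun i => ?_) j
      · simpa using hB1
      · simpa using hP'τ i

/-- If `β` is the truncated proportional share of an agent, i.e. the largest
nonnegative real satisfying `β = (1/n) * Σ_{e ∈ M} min (v e) β`, then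
`TPS ≥ MMS ≥ (n / (2n - 1)) * TPS`. -/
theorem tps_bounds_mms {n : ℕ} (hn : 1 ≤ n) {M : Type*} [Fintype M] [DecidableEq M]
    (v : M → ℝ) (hv : ∀ g, 0 ≤ v g)
    (β : ℝ) (hβ0 : 0 ≤ β)
    (hβ : β = (1 / (n : ℝ)) * ∑ e, min (v e) β)
    (hmax : ∀ β' : ℝ, 0 ≤ β' → β' = (1 / (n : ℝ)) * ∑ e, min (v e) β' → β' ≤ β) :
    mms v n Finset.univ ≤ β ∧
      ((n : ℝ) / (2 * (n : ℝ) - 1)) * β ≤ mms v n Finset.univ := by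
  have hk : 0 < n := hn
  haveI : Nonempty (Fin n) := ⟨⟨0, hk⟩⟩
  have hnR : (0:ℝ) < n := by exact_mod_cast hk
  have hnR1 : (1:ℝ) ≤ n := by exact_mod_cast hn
  set μ := mms v n Finset.univ with hμdef
  have hμ_eq : mms v n Finset.univ =
      Finset.sup' Finset.univ Finset.univ_nonempty (fun f : M → Fin n =>
        Finset.inf' Finset.univ Finset.univ_nonempty fun j : Fin n =>
          ∑ g ∈ Finset.univ.filter (fun g => f g = j), v g) := by
    rw [mms, dif_pos hk]
  -- lower bound for the sup': any single partition gives a lower bound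
  have hsup_ge : ∀ f : M → Fin n,
      (Finset.inf' Finset.univ Finset.univ_nonempty fun j : Fin n =>
        ∑ g ∈ Finset.univ.filter (fun g => f g = j), v g) ≤ μ := by
    intro f
    rw [hμdef, hμ_eq]
    exact Finset.le_sup' (fun f : M → Fin n =>
      Finset.inf' Finset.univ Finset.univ_nonempty fun j : Fin n =>
        ∑ g ∈ Finset.univ.filter (fun g => f g = j), v g) (Finset.mem_univ f)
  -- μ ≥ 0
  have hμ0 : 0 ≤ μ := by
    refine le_trans ?_ (hsup_ge (fun _ => ⟨0, hk⟩))
    refine Finset.le_inf' _ _ fun j _ => ?_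
    exact Finset.sum_nonneg fun g _ => hv g
  -- first part : μ ≤ β via the fixed-point (Knaster–Tarski) argument
  have hμφ : μ ≤ (1 / (n : ℝ)) * ∑ e, min (v e) μ := by
    obtain ⟨f, _, hf⟩ := Finset.exists_mem_eq_sup'
      (Finset.univ_nonempty : (Finset.univ : Finset (M → Fin n)).Nonempty)
      (fun f : M → Fin n =>
        Finset.inf' Finset.univ Finset.univ_nonempty fun j : Fin n =>
          ∑ g ∈ Finset.univ.filter (fun g => f g = j), v g)
    have hμf : μ = Finset.inf' Finset.univ Finset.univ_nonempty fun j : Fin n =>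
        ∑ g ∈ Finset.univ.filter (fun g => f g = j), v g := by
      rw [hμdef, hμ_eq, hf]
    have hbundle : ∀ j : Fin n,
        μ ≤ ∑ g ∈ Finset.univ.filter (fun g => f g = j), min (v g) μ := by
      intro j
      have hvB : μ ≤ ∑ g ∈ Finset.univ.filter (fun g => f g = j), v g := by
        rw [hμf]; exact Finset.inf'_le _ (Finset.mem_univ j)
      by_cases hbig : ∃ g ∈ Finset.univ.filter (fun g => f g = j), μ ≤ v g
      · obtain ⟨g, hg, hμg⟩ := hbig
        have h1 : min (v g) μ = μ := min_eq_right hμg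
        have h2 : min (v g) μ ≤ ∑ g ∈ Finset.univ.filter (fun g => f g = j),
            min (v g) μ :=
          Finset.single_le_sum (fun i _ => le_min (hv i) hμ0) hg
        linarith
      · push_neg at hbig
        calc μ ≤ ∑ g ∈ Finset.univ.filter (fun g => f g = j), v g := hvB
        _ = ∑ g ∈ Finset.univ.filter (fun g => f g = j), min (v g) μ :=
          Finset.sum_congr rfl fun g hg => (min_eq_left (hbig g hg).le).symm
    have hfib : ∑ j : Fin n, ∑ g ∈ Finset.univ.filter (fun g => f g = j),
        min (v g) μ = ∑ e, min (v e) μ :=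
      Finset.sum_fiberwise Finset.univ f (fun e => min (v e) μ)
    have hsum : (n : ℝ) * μ ≤ ∑ e, min (v e) μ := by
      rw [← hfib]
      calc (n:ℝ) * μ = ∑ _j : Fin n, μ := by
            rw [Finset.sum_const, Finset.card_univ, Fintype.card_fin, nsmul_eq_mul]
      _ ≤ _ := Finset.sum_le_sum fun j _ => hbundle j
    calc μ = (1/(n:ℝ)) * ((n:ℝ) * μ) := by field_simp
    _ ≤ (1/(n:ℝ)) * ∑ e, min (v e) μ :=
      mul_le_mul_of_nonneg_left hsum (by positivity)
  have hupper : μ ≤ β := by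
    set φ : ℝ → ℝ := fun t => (1 / (n : ℝ)) * ∑ e, min (v e) t with hφdef
    have hmono : Monotone φ := by
      intro a b hab
      exact mul_le_mul_of_nonneg_left
        (Finset.sum_le_sum fun e _ => min_le_min le_rfl hab) (by positivity)
    set A : Set ℝ := {t | 0 ≤ t ∧ t ≤ φ t} with hAdef
    have hμA : μ ∈ A := ⟨hμ0, hμφ⟩
    have hbdd : BddAbove A := by
      refine ⟨(1 / (n : ℝ)) * ∑ e, v e, fun t ht => ?_⟩
      refine ht.2.trans (mul_le_mul_of_nonneg_left
        (Finset.sum_le_sum fun e _ => min_le_left _ _) (by positivity))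
    set γ := sSup A with hγdef
    have hμγ : μ ≤ γ := le_csSup hbdd hμA
    have hγ0 : 0 ≤ γ := hμ0.trans hμγ
    have h1 : γ ≤ φ γ := csSup_le ⟨μ, hμA⟩ fun t ht =>
      ht.2.trans (hmono (le_csSup hbdd ht))
    have hφγ0 : 0 ≤ φ γ := by
      refine mul_nonneg (by positivity) (Finset.sum_nonneg fun e _ => ?_)
      exact le_min (hv e) hγ0
    have h2 : φ γ ≤ γ := le_csSup hbdd ⟨hφγ0, hmono h1⟩
    have hfix : γ = φ γ := le_antisymm h1 h2
    exact hμγ.trans (hmax γ hγ0 hfix)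
  refine ⟨hupper, ?_⟩
  -- second part : lower bound
  rcases eq_or_lt_of_le hβ0 with hβz | hβpos
  · rw [← hβz, mul_zero]; exact hμ0
  · obtain ⟨m, rfl⟩ : ∃ m, n = m + 1 := ⟨n - 1, (Nat.succ_pred_eq_of_pos hk).symm⟩
    set τ : ℝ := ((m+1 : ℕ) : ℝ) / (2 * ((m+1 : ℕ) : ℝ) - 1) * β with hτdef
    have hm1 : ((m+1:ℕ):ℝ) = (m:ℝ) + 1 := by push_cast; ring
    have hmR : (0:ℝ) ≤ m := by positivity
    have hden : (0:ℝ) < 2 * ((m+1 : ℕ) : ℝ) - 1 := by rw [hm1]; linarith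
    have hτpos : 0 < τ := by
      rw [hτdef]; positivity
    have hdne : (2 * ((m:ℝ)+1) - 1) ≠ 0 := by
      have : (0:ℝ) < 2 * ((m:ℝ)+1) - 1 := by linarith
      exact ne_of_gt this
    have hτ_eq : τ * (2 * ((m:ℝ)+1) - 1) = ((m:ℝ)+1) * β := by
      rw [hτdef, hm1]
      field_simp
      exact div_self (ne_of_gt (by linarith))
    have hτβ1 : τ ≤ β := by
      nlinarith [hτ_eq, hβpos, hmR, hτpos, mul_nonneg hmR hτpos.le,
        mul_nonneg hmR hβpos.le]
    have hτβ2 : β < 2 * τ := by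
      nlinarith [hτ_eq, hβpos, hmR, hτpos, mul_nonneg hmR hτpos.le,
        mul_nonneg hmR hβpos.le]
    have hw0 : ∀ e, 0 ≤ min (v e) β := fun e => le_min (hv e) hβ0
    have hw2 : ∀ e, min (v e) β < 2 * τ := fun e =>
      lt_of_le_of_lt (min_le_right _ _) hτβ2
    have hsum : ∑ e, min (v e) β = ((m:ℝ) + 1) * β := by
      have h := hβ
      rw [hm1] at h
      field_simp [show ((m:ℝ)+1) ≠ 0 by positivity] at h
      linarith
    have htot : 2 * τ * (m:ℕ) + τ ≤ ∑ e, min (v e) β := by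
      rw [hsum]
      -- cast already normal
      linarith [hτ_eq]
    obtain ⟨P, hPS, hPd, hPτ⟩ := tps_partition (fun e => min (v e) β) τ hτpos
      hw0 hw2 m Finset.univ htot
    -- build the partition function
    classical
    set f : M → Fin (m+1) := fun g =>
      if h : ∃ j, g ∈ P j then h.choose else ⟨0, hk⟩ with hfdef
    have hfP : ∀ j, ∀ g ∈ P j, f g = j := by
      intro j g hg
      have h : ∃ j, g ∈ P j := ⟨j, hg⟩
      rw [hfdef]
      simp only [dif_pos h]
      by_contra hne
      exact Finset.disjoint_left.1 (hPd _ _ hne) h.choose_spec hg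
    have hclass : ∀ j : Fin (m+1),
        τ ≤ ∑ g ∈ Finset.univ.filter (fun g => f g = j), v g := by
      intro j
      have hsub : P j ⊆ Finset.univ.filter (fun g => f g = j) := by
        intro g hg
        simp [hfP j g hg]
      calc τ ≤ ∑ e ∈ P j, min (v e) β := hPτ j
      _ ≤ ∑ e ∈ P j, v e := Finset.sum_le_sum fun e _ => min_le_left _ _
      _ ≤ ∑ g ∈ Finset.univ.filter (fun g => f g = j), v g :=
          Finset.sum_le_sum_of_subset_of_nonneg hsub fun g _ _ => hv g
    show τ ≤ μ
    calc τ ≤ Finset.inf' Finset.univ Finset.univ_nonempty (fun j : Fin (m+1) =>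
          ∑ g ∈ Finset.univ.filter (fun g => f g = j), v g) :=
        Finset.le_inf' _ _ fun j _ => hclass j
    _ ≤ μ := hsup_ge f
end

section
/- Let I = (N, M, (v_i)) be a fair division instance with n agents, m goods, and additive valuations, and let Î = (N, M̂, (v̂_i)) be an associated ordered instance: M̂ = {ê_1, …, ê_m} and, for each agent i, the sequence (v̂_i(ê_1), …, v̂_i(ê_m)) is the non-increasing rearrangement of the multiset of item values {v_i(g) : g ∈ M}. If Î admits an allocation (B̂_1, …, B̂_n) such that v̂_i(B̂_i) ≥ α·MMS_i(Î) for every agent i, then I admits an allocation (B_1, …, B_n) such that v_i(B_i) ≥ α·MMS_i(I) for every agent i, where α ≥ 0. -/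
lemma antitone_unique {m : ℕ} (a b : Fin m → ℝ)
    (ha : ∀ j k : Fin m, j ≤ k → a k ≤ a j) (hb : ∀ j k : Fin m, j ≤ k → b k ≤ b j)
    (h : Multiset.map a Finset.univ.val = Multiset.map b Finset.univ.val) : a = b := by
  rw [Fin.univ_val_map, Fin.univ_val_map] at h
  apply List.ofFn_injective (n := m)
  refine List.Perm.eq_of_pairwise' (r := fun x y : ℝ => y ≤ x) ?_ ?_ (Multiset.coe_eq_coe.mp h)
  · exact List.pairwise_ofFn.mpr fun i j hij => ha i j hij.le
  · exact List.pairwise_ofFn.mpr fun i j hij => hb i j hij.le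

lemma map_univ_perm {m : ℕ} (f : Equiv.Perm (Fin m)) (g : Fin m → ℝ) :
    Multiset.map (g ∘ f) Finset.univ.val = Multiset.map g Finset.univ.val := by
  have h : Finset.univ.val.map ⇑f = Finset.univ.val := by
    have h2 := Finset.map_univ_equiv f
    calc Finset.univ.val.map ⇑f = (Finset.univ.map f.toEmbedding).val := rfl
      _ = Finset.univ.val := by rw [h2]
  calc Multiset.map (g ∘ ⇑f) Finset.univ.val
      = Multiset.map g (Finset.univ.val.map ⇑f) := by rw [Multiset.map_map]
    _ = Multiset.map g Finset.univ.val := by rw [h]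

lemma exists_equiv {m : ℕ} {M : Type*} [Fintype M] [DecidableEq M]
    (hm : Fintype.card M = m) (w : M → ℝ) (vh : Fin m → ℝ)
    (hord : ∀ j k : Fin m, j ≤ k → vh k ≤ vh j)
    (hperm : Multiset.map vh Finset.univ.val = Multiset.map w Finset.univ.val) :
    ∃ e : Fin m ≃ M, ∀ k, w (e k) = vh k := by
  classical
  let ε : M ≃ Fin m := Fintype.equivFinOfCardEq hm
  let u : Fin m → ℝ := w ∘ ε.symm
  let u' : Fin m → ℝᵒᵈ := fun k => OrderDual.toDual (u k)
  let σ := Tuple.sort u'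
  have hmono := Tuple.monotone_sort u'
  have hanti : ∀ j k : Fin m, j ≤ k → u (σ k) ≤ u (σ j) := fun j k hjk => hmono hjk
  have hmapu : Multiset.map u Finset.univ.val = Multiset.map vh Finset.univ.val := by
    have h : Finset.univ.val.map ⇑ε.symm = (Finset.univ : Finset M).val := by
      have h2 := Finset.map_univ_equiv ε.symm
      calc Finset.univ.val.map ⇑ε.symm = (Finset.univ.map ε.symm.toEmbedding).val := rfl
        _ = Finset.univ.val := by rw [h2]
    have h1 : Multiset.map u Finset.univ.val = Multiset.map w Finset.univ.val := by
      calc Multiset.map u Finset.univ.val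
          = Multiset.map w (Finset.univ.val.map ⇑ε.symm) := by rw [Multiset.map_map]
        _ = Multiset.map w Finset.univ.val := by rw [h]
    rw [h1, hperm]
  have heq : u ∘ ⇑σ = vh := by
    apply antitone_unique (u ∘ ⇑σ) vh hanti hord
    rw [map_univ_perm σ u, hmapu]
  exact ⟨(σ : Equiv.Perm (Fin m)).trans ε.symm, fun k => congrFun heq k⟩

lemma mms_equiv {n m : ℕ} {M : Type*} [Fintype M] [DecidableEq M]
    (e : Fin m ≃ M) (w : M → ℝ) (vh : Fin m → ℝ) (h : ∀ k, w (e k) = vh k) :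
    mms vh n Finset.univ = mms w n Finset.univ := by
  classical
  unfold mms
  by_cases hn : 0 < n
  · rw [dif_pos hn, dif_pos hn]
    haveI : Nonempty (Fin n) := ⟨⟨0, hn⟩⟩
    have inner : ∀ f : M → Fin n,
        (Finset.inf' Finset.univ Finset.univ_nonempty fun j : Fin n =>
          ∑ k ∈ Finset.univ.filter (fun k => (f ∘ e) k = j), vh k)
        = Finset.inf' Finset.univ Finset.univ_nonempty fun j : Fin n =>
          ∑ g ∈ Finset.univ.filter (fun g => f g = j), w g := by
      intro f
      apply Finset.inf'_congr _ rfl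
      intro j _
      apply Finset.sum_equiv e
      · intro k; simp
      · intro k _; exact (h k).symm
    apply le_antisymm
    · apply Finset.sup'_le
      intro fhat _
      have hcomp : (fhat ∘ e.symm) ∘ e = fhat := by funext k; simp
      have := inner (fhat ∘ e.symm)
      rw [hcomp] at this
      exact le_trans (le_of_eq this)
        (Finset.le_sup' (fun f : M → Fin n => Finset.inf' Finset.univ Finset.univ_nonempty
          fun j : Fin n => ∑ g ∈ Finset.univ.filter (fun g => f g = j), w g)
          (Finset.mem_univ (fhat ∘ ⇑e.symm)))
    · apply Finset.sup'_le
      intro f _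
      rw [← inner f]
      exact Finset.le_sup' (fun fh : Fin m → Fin n => Finset.inf' Finset.univ
        Finset.univ_nonempty fun j : Fin n =>
          ∑ k ∈ Finset.univ.filter (fun k => fh k = j), vh k)
        (Finset.mem_univ (f ∘ ⇑e))
  · rw [dif_neg hn, dif_neg hn]

/-- From an ordered instance back to the original instance: let `Î` be the ordered
instance associated to `I = (N, M, (v i))`, i.e. the goods of `Î` are `Fin m` with
`m = |M|` and, for each agent `i`, the item values `v̂ i` are non-increasing and form
a rearrangement of the multiset of values `{v i g : g ∈ M}`.  If `Î` admits an
allocation `(B̂ i)` with `v̂ i (B̂ i) ≥ α * MMS i (Î)` for all `i`, then `I` admits an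
allocation `(B i)` with `v i (B i) ≥ α * MMS i (I)` for all `i`. -/
theorem ordered_instance_reduction
    {n m : ℕ} (hn : 0 < n) {M : Type*} [Fintype M] [DecidableEq M]
    (hm : Fintype.card M = m)
    (v : Fin n → M → ℝ) (hv : ∀ i g, 0 ≤ v i g)
    (vhat : Fin n → Fin m → ℝ)
    (hord : ∀ i, ∀ j k : Fin m, j ≤ k → vhat i k ≤ vhat i j)
    (hperm : ∀ i,
      Multiset.map (vhat i) Finset.univ.val = Multiset.map (v i) Finset.univ.val)
    (α : ℝ) (hα : 0 ≤ α)
    (Bhat : Fin n → Finset (Fin m))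
    (hdisj : ∀ i j, i ≠ j → Disjoint (Bhat i) (Bhat j))
    (hcover : Finset.univ.biUnion Bhat = Finset.univ)
    (hval : ∀ i, α * mms (vhat i) n Finset.univ ≤ ∑ g ∈ Bhat i, vhat i g) :
    ∃ B : Fin n → Finset M,
      (∀ i j, i ≠ j → Disjoint (B i) (B j)) ∧
      Finset.univ.biUnion B = Finset.univ ∧
      ∀ i, α * mms (v i) n Finset.univ ≤ ∑ g ∈ B i, v i g := by
  classical
  have hE : ∀ i, ∃ e : Fin m ≃ M, ∀ k, v i (e k) = vhat i k :=
    fun i => exists_equiv hm (v i) (vhat i) (hord i) (hperm i)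
  choose E hEval using hE
  have hπex : ∀ j : Fin m, ∃ i, j ∈ Bhat i := by
    intro j
    have hj : j ∈ Finset.univ.biUnion Bhat := by rw [hcover]; exact Finset.mem_univ j
    obtain ⟨i, _, hi⟩ := Finset.mem_biUnion.mp hj
    exact ⟨i, hi⟩
  choose π hπ using hπex
  have hπuniq : ∀ i, ∀ j ∈ Bhat i, π j = i := by
    intro i j hj
    by_contra hne
    exact (Finset.disjoint_left.mp (hdisj _ _ hne) (hπ j)) hj
  set t : Fin m → Finset M :=
    fun j => Finset.univ.filter (fun g => vhat (π j) j ≤ v (π j) g) with ht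
  have hcard : ∀ j : Fin m, (j : ℕ) + 1 ≤ (t j).card := by
    intro j
    have hsub : (Finset.Iic j).image (E (π j)) ⊆ t j := by
      intro g hg
      obtain ⟨k, hk, rfl⟩ := Finset.mem_image.mp hg
      simp only [ht, Finset.mem_filter, Finset.mem_univ, true_and]
      rw [hEval (π j) k]
      exact hord (π j) k j (Finset.mem_Iic.mp hk)
    calc (j : ℕ) + 1 = (Finset.Iic j).card := (Fin.card_Iic j).symm
      _ = ((Finset.Iic j).image (E (π j))).card :=
          (Finset.card_image_of_injective _ (E (π j)).injective).symm
      _ ≤ (t j).card := Finset.card_le_card hsub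
  have hall : ∀ s : Finset (Fin m), s.card ≤ (s.biUnion t).card := by
    intro s
    rcases s.eq_empty_or_nonempty with rfl | hs
    · simp
    · have h1 : s ⊆ Finset.Iic (s.max' hs) :=
        fun x hx => Finset.mem_Iic.mpr (Finset.le_max' s x hx)
      have h2 : t (s.max' hs) ⊆ s.biUnion t :=
        Finset.subset_biUnion_of_mem t (s.max'_mem hs)
      calc s.card ≤ (Finset.Iic (s.max' hs)).card := Finset.card_le_card h1
        _ = ((s.max' hs : Fin m) : ℕ) + 1 := Fin.card_Iic _
        _ ≤ (t (s.max' hs)).card := hcard _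
        _ ≤ (s.biUnion t).card := Finset.card_le_card h2
  obtain ⟨τ, hτinj, hτmem⟩ :=
    (Finset.all_card_le_biUnion_card_iff_exists_injective t).mp hall
  refine ⟨fun i => (Bhat i).image τ, ?_, ?_, ?_⟩
  · intro i j hij
    exact (Finset.disjoint_image hτinj).mpr (hdisj i j hij)
  · have h1 : Finset.univ.biUnion (fun i => (Bhat i).image τ)
        = (Finset.univ.biUnion Bhat).image τ := (Finset.biUnion_image).symm
    rw [h1, hcover]
    apply Finset.eq_univ_of_card
    rw [Finset.card_image_of_injective _ hτinj, Finset.card_univ, Fintype.card_fin, hm]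
  · intro i
    have hmmseq : mms (vhat i) n Finset.univ = mms (v i) n Finset.univ :=
      mms_equiv (E i) (v i) (vhat i) (hEval i)
    calc α * mms (v i) n Finset.univ = α * mms (vhat i) n Finset.univ := by rw [hmmseq]
      _ ≤ ∑ j ∈ Bhat i, vhat i j := hval i
      _ ≤ ∑ j ∈ Bhat i, v i (τ j) := by
          apply Finset.sum_le_sum
          intro j hj
          have h1 := hτmem j
          simp only [ht, Finset.mem_filter, Finset.mem_univ, true_and] at h1
          rw [hπuniq i j hj] at h1
          exact h1
      _ = ∑ g ∈ (Bhat i).image τ, v i g :=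
          (Finset.sum_image (fun x _ y _ h => hτinj h)).symm
end
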